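/- arXiv:1508.05057 — 4 statements merged into one kernel-verified Lean document; each statement's English description precedes it below -/
import Mathlib

section
/- Let 1 < p < ∞ and let Q₀ ⊂ ℝⁿ be a cube with sides parallel to the coordinate axes. Then for every f ∈ L¹(Q₀), GaRo_p(f,Q₀) ≤ 2 · JN_p(f,Q₀); in particular JN_p(Q₀) ⊂ GaRo_p(Q₀). -/
open MeasureTheory Set
open scoped ENNReal NNReal

noncomputable section

/-- The distribution function `λ_f(t) = μ {x : |f(x)| > t}`. -/
def distFun {α : Type*} [MeasurableSpace α] (μ : Measure α) (f : α → ℝ) (t : ℝ) : ℝ≥0∞ :=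
  μ {x | t < |f x|}

/-- The non-increasing rearrangement `f*(t) = inf {s > 0 : λ_f(s) ≤ t}`. -/
def rearr {α : Type*} [MeasurableSpace α] (μ : Measure α) (f : α → ℝ) (t : ℝ) : ℝ≥0∞ :=
  sInf (ENNReal.ofReal '' {s : ℝ | 0 < s ∧ distFun μ f s ≤ ENNReal.ofReal t})

/-- The maximal function `f**(t) = (1/t) ∫₀ᵗ f*(s) ds`. -/
def dstar {α : Type*} [MeasurableSpace α] (μ : Measure α) (f : α → ℝ) (t : ℝ) : ℝ≥0∞ :=
  (∫⁻ s in Set.Ioc (0 : ℝ) t, rearr μ f s) / ENNReal.ofReal t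

/-- The `L(∞,∞)` "norm" : `sup_{t>0} (f**(t) - f*(t))`. -/
def oscNorm {α : Type*} [MeasurableSpace α] (μ : Measure α) (f : α → ℝ) : ℝ≥0∞ :=
  ⨆ (t : ℝ) (_ : 0 < t), dstar μ f t - rearr μ f t

/-- The Marcinkiewicz `L(p,∞)` quasinorm `‖f‖*_{L(p,∞)} = sup_{t>0} t (λ_f(t))^{1/p}`. -/
def wkNorm {α : Type*} [MeasurableSpace α] (μ : Measure α) (p : ℝ) (f : α → ℝ) : ℝ≥0∞ :=
  ⨆ (t : ℝ) (_ : 0 < t), ENNReal.ofReal t * distFun μ f t ^ (1 / p)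

/-- `‖f‖_{L(p,∞)} = sup_{s>0} s^{1/p} f**(s)`. -/
def wkNormStarStar {α : Type*} [MeasurableSpace α] (μ : Measure α) (p : ℝ) (f : α → ℝ) : ℝ≥0∞ :=
  ⨆ (s : ℝ) (_ : 0 < s), ENNReal.ofReal s ^ (1 / p) * dstar μ f s

/-- `‖f‖*_{L(p,∞)} = sup_{s>0} s^{1/p} f*(s)` (rearrangement form). -/
def wkNormStar {α : Type*} [MeasurableSpace α] (μ : Measure α) (p : ℝ) (f : α → ℝ) : ℝ≥0∞ :=
  ⨆ (s : ℝ) (_ : 0 < s), ENNReal.ofReal s ^ (1 / p) * rearr μ f s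

/-- `‖f‖^#_{L(p,∞)} = sup_{s>0} s^{1/p} (f**(s) - f*(s))`. -/
def sharpNorm {α : Type*} [MeasurableSpace α] (μ : Measure α) (p : ℝ) (f : α → ℝ) : ℝ≥0∞ :=
  ⨆ (s : ℝ) (_ : 0 < s), ENNReal.ofReal s ^ (1 / p) * (dstar μ f s - rearr μ f s)

/-- `‖f‖^{##}_{L(p,∞)} = sup_{t>0} (λ_f(t))^{-(1-1/p)} ∫_t^∞ λ_f(s) ds`. -/
def sharpSharpNorm {α : Type*} [MeasurableSpace α] (μ : Measure α) (p : ℝ) (f : α → ℝ) : ℝ≥0∞ :=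
  ⨆ (t : ℝ) (_ : 0 < t),
    distFun μ f t ^ (-(1 - 1 / p)) * ∫⁻ s in Set.Ioi t, distFun μ f s

/-- `‖f‖^{##}_{L(∞,∞)} = inf {C : ∫_t^∞ λ_f(s) ds ≤ C λ_f(t) for all t > 0}`. -/
def sharpSharpInf {α : Type*} [MeasurableSpace α] (μ : Measure α) (f : α → ℝ) : ℝ≥0∞ :=
  sInf {C : ℝ≥0∞ | ∀ t : ℝ, 0 < t →
    ∫⁻ s in Set.Ioi t, distFun μ f s ≤ C * distFun μ f t}

/-- O'Neil's quantity `inf {C^{1/p} : ∫_t^∞ λ_f(s) ds ≤ C t^{1-p} for all t > 0}`. -/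
def oneilQuantity {α : Type*} [MeasurableSpace α] (μ : Measure α) (p : ℝ) (f : α → ℝ) : ℝ≥0∞ :=
  sInf {D : ℝ≥0∞ | ∃ C : ℝ≥0∞, D = C ^ (1 / p) ∧
    ∀ t : ℝ, 0 < t → ∫⁻ s in Set.Ioi t, distFun μ f s ≤ C * ENNReal.ofReal t ^ (1 - p)}

/-- A cube in `ℝⁿ` with sides parallel to the coordinate axes. -/
def IsCube {n : ℕ} (Q : Set (Fin n → ℝ)) : Prop :=
  ∃ (a : Fin n → ℝ) (l : ℝ), 0 < l ∧ Q = Set.univ.pi fun i => Set.Icc (a i) (a i + l)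

/-- A countable family of subcubes of `Q₀` with pairwise disjoint interiors. -/
def IsPackingIn {n : ℕ} (Q₀ : Set (Fin n → ℝ)) (Q : ℕ → Set (Fin n → ℝ)) : Prop :=
  (∀ i, IsCube (Q i) ∧ Q i ⊆ Q₀) ∧
    Pairwise fun i j => interior (Q i) ∩ interior (Q j) = ∅

/-- The average `f_Q = (1/|Q|) ∫_Q f`. -/
def cubeAvg {n : ℕ} (f : (Fin n → ℝ) → ℝ) (Q : Set (Fin n → ℝ)) : ℝ :=
  ⨍ x in Q, f x

/-- The mean oscillation `(1/|Q|) ∫_Q |f - f_Q|`. -/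
def meanOsc {n : ℕ} (f : (Fin n → ℝ) → ℝ) (Q : Set (Fin n → ℝ)) : ℝ :=
  ⨍ x in Q, |f x - cubeAvg f Q|

/-- The John–Nirenberg functional `JN_p(f,Q₀)`. -/
def JN {n : ℕ} (p : ℝ) (f : (Fin n → ℝ) → ℝ) (Q₀ : Set (Fin n → ℝ)) : ℝ≥0∞ :=
  ⨆ (Q : ℕ → Set (Fin n → ℝ)) (_ : IsPackingIn Q₀ Q),
    (∑' i, volume (Q i) * ENNReal.ofReal (meanOsc f (Q i)) ^ p) ^ (1 / p)

/-- The BMO norm `‖f‖_{BMO(Q₀)}`. -/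
def bmoNorm {n : ℕ} (f : (Fin n → ℝ) → ℝ) (Q₀ : Set (Fin n → ℝ)) : ℝ≥0∞ :=
  ⨆ (Q : Set (Fin n → ℝ)) (_ : IsCube Q ∧ Q ⊆ Q₀), ENNReal.ofReal (meanOsc f Q)

/-- The Garsia–Rodemich functional `GaRo_p(f,Q₀)`: the least constant `C` such that
for every packing `{Qᵢ}` of `Q₀`,
`Σᵢ (1/|Qᵢ|) ∫_{Qᵢ}∫_{Qᵢ} |f(x)-f(y)| dx dy ≤ C (Σᵢ |Qᵢ|)^{1/p'}` where `1/p' = 1 - 1/p`. -/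
def GaRo {n : ℕ} (p : ℝ) (f : (Fin n → ℝ) → ℝ) (Q₀ : Set (Fin n → ℝ)) : ℝ≥0∞ :=
  sInf {C : ℝ≥0∞ | ∀ Q : ℕ → Set (Fin n → ℝ), IsPackingIn Q₀ Q →
    (∑' i, (volume (Q i))⁻¹ *
        ∫⁻ x in Q i, ∫⁻ y in Q i, ENNReal.ofReal |f x - f y|) ≤
      C * (∑' i, volume (Q i)) ^ (1 - 1 / p)}

/-!
On each cube `Q`, the triangle inequality through the mean `f_Q` gives
`(1/|Q|) ∫_Q∫_Q |f(x) - f(y)| ≤ 2 |Q| · (1/|Q|) ∫_Q |f - f_Q|`. Summing over a packing and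
applying the weighted Hölder inequality with weights `|Qᵢ|` bounds the sum by
`2 (Σ |Qᵢ| osc(f, Qᵢ)^p)^{1/p} (Σ |Qᵢ|)^{1/p'} ≤ 2 JN_p(f, Q₀) (Σ |Qᵢ|)^{1/p'}`.
-/

namespace ENNReal

theorem tsum_mul_le_weight_mul_Lp {ι : Type*} {p : ℝ} (hp : 1 ≤ p) (w f : ι → ℝ≥0∞) :
    ∑' i, w i * f i ≤ (∑' i, w i) ^ (1 - p⁻¹) * (∑' i, w i * f i ^ p) ^ p⁻¹ := by
  have hp₀ : 0 ≤ p⁻¹ := inv_nonneg.2 (zero_le_one.trans hp)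
  have hp₁ : 0 ≤ 1 - p⁻¹ := sub_nonneg.2 (inv_le_one_of_one_le₀ hp)
  rw [ENNReal.tsum_eq_iSup_sum]
  refine iSup_le fun s => (inner_le_weight_mul_Lp_of_nonneg s hp w f).trans ?_
  gcongr <;> exact ENNReal.sum_le_tsum s

end ENNReal

theorem lintegral_lintegral_abs_sub_le {α : Type*} [MeasurableSpace α] {μ : Measure α}
    {f : α → ℝ} (hf : AEMeasurable f μ) (c : ℝ) :
    ∫⁻ x, ∫⁻ y, ENNReal.ofReal |f x - f y| ∂μ ∂μ ≤
      2 * μ univ * ∫⁻ x, ENNReal.ofReal |f x - c| ∂μ := by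
  set g : α → ℝ≥0∞ := fun x => ENNReal.ofReal |f x - c|
  have hg : AEMeasurable g μ := ((hf.sub_const c).abs).ennreal_ofReal
  have triangle : ∀ x y, ENNReal.ofReal |f x - f y| ≤ g x + g y := fun x y => by
    rw [← ENNReal.ofReal_add (abs_nonneg _) (abs_nonneg _), abs_sub_comm (f y)]
    exact ENNReal.ofReal_le_ofReal (abs_sub_le _ _ _)
  calc ∫⁻ x, ∫⁻ y, ENNReal.ofReal |f x - f y| ∂μ ∂μ
      ≤ ∫⁻ x, ∫⁻ y, (g x + g y) ∂μ ∂μ := lintegral_mono fun x => lintegral_mono (triangle x)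
    _ = ∫⁻ x, (g x * μ univ + ∫⁻ y, g y ∂μ) ∂μ := by
        simp only [lintegral_add_left measurable_const, lintegral_const]
    _ = 2 * μ univ * ∫⁻ x, g x ∂μ := by
        rw [lintegral_add_right _ measurable_const, lintegral_mul_const'' _ hg, lintegral_const]
        ring

theorem lintegral_abs_sub_cubeAvg {n : ℕ} {f : (Fin n → ℝ) → ℝ} {Q : Set (Fin n → ℝ)}
    (hQ : volume Q ≠ ∞) (hf : IntegrableOn f Q) :
    ∫⁻ x in Q, ENNReal.ofReal |f x - cubeAvg f Q| = volume Q * ENNReal.ofReal (meanOsc f Q) := by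
  have hosc : IntegrableOn (fun x => |f x - cubeAvg f Q|) Q :=
    (hf.sub (integrableOn_const hQ)).abs
  rw [← ofReal_integral_eq_lintegral_ofReal hosc (.of_forall fun _ => abs_nonneg _),
    ← measure_smul_setAverage _ hQ, smul_eq_mul, measureReal_def,
    ENNReal.ofReal_mul ENNReal.toReal_nonneg, ENNReal.ofReal_toReal hQ, meanOsc]

theorem inv_volume_mul_lintegral_lintegral_abs_sub_le {n : ℕ} {f : (Fin n → ℝ) → ℝ}
    {Q : Set (Fin n → ℝ)} (hQ₀ : volume Q ≠ 0) (hQ : volume Q ≠ ∞) (hf : IntegrableOn f Q) :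
    (volume Q)⁻¹ * ∫⁻ x in Q, ∫⁻ y in Q, ENNReal.ofReal |f x - f y| ≤
      2 * (volume Q * ENNReal.ofReal (meanOsc f Q)) := by
  have h := lintegral_lintegral_abs_sub_le hf.aemeasurable (cubeAvg f Q)
  rw [Measure.restrict_apply_univ, lintegral_abs_sub_cubeAvg hQ hf] at h
  calc (volume Q)⁻¹ * ∫⁻ x in Q, ∫⁻ y in Q, ENNReal.ofReal |f x - f y|
      ≤ (volume Q)⁻¹ * (volume Q * (2 * (volume Q * ENNReal.ofReal (meanOsc f Q)))) := by
        gcongr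
        exact h.trans_eq (by ring)
    _ = 2 * (volume Q * ENNReal.ofReal (meanOsc f Q)) := by
        rw [← mul_assoc, ENNReal.inv_mul_cancel hQ₀ hQ, one_mul]

theorem IsCube.volume_ne_zero {n : ℕ} {Q : Set (Fin n → ℝ)} (hQ : IsCube Q) : volume Q ≠ 0 := by
  obtain ⟨a, l, hl, rfl⟩ := hQ
  simp [Real.volume_Icc_pi, hl]

theorem IsCube.volume_ne_top {n : ℕ} {Q : Set (Fin n → ℝ)} (hQ : IsCube Q) : volume Q ≠ ∞ := by
  obtain ⟨a, l, hl, rfl⟩ := hQ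
  simp [Real.volume_Icc_pi]

theorem gaRo_le_two_jn_general {n : ℕ} (p : ℝ) (hp : 1 < p)
    (Q₀ : Set (Fin n → ℝ))
    (f : (Fin n → ℝ) → ℝ) (hf : IntegrableOn f Q₀) :
    GaRo p f Q₀ ≤ 2 * JN p f Q₀ := by
  refine sInf_le fun Q hQ => ?_
  have hterm : ∀ i, (volume (Q i))⁻¹ * ∫⁻ x in Q i, ∫⁻ y in Q i, ENNReal.ofReal |f x - f y| ≤
      2 * (volume (Q i) * ENNReal.ofReal (meanOsc f (Q i))) := fun i =>
    inv_volume_mul_lintegral_lintegral_abs_sub_le (hQ.1 i).1.volume_ne_zero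
      (hQ.1 i).1.volume_ne_top (hf.mono_set (hQ.1 i).2)
  have hJN : (∑' i, volume (Q i) * ENNReal.ofReal (meanOsc f (Q i)) ^ p) ^ p⁻¹ ≤ JN p f Q₀ := by
    rw [← one_div]
    exact le_iSup₂ (f := fun Q (_ : IsPackingIn Q₀ Q) =>
      (∑' i, volume (Q i) * ENNReal.ofReal (meanOsc f (Q i)) ^ p) ^ (1 / p)) Q hQ
  calc ∑' i, (volume (Q i))⁻¹ * ∫⁻ x in Q i, ∫⁻ y in Q i, ENNReal.ofReal |f x - f y|
      ≤ 2 * ∑' i, volume (Q i) * ENNReal.ofReal (meanOsc f (Q i)) := by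
        rw [← ENNReal.tsum_mul_left]
        exact ENNReal.tsum_le_tsum hterm
    _ ≤ 2 * ((∑' i, volume (Q i)) ^ (1 - p⁻¹) *
          (∑' i, volume (Q i) * ENNReal.ofReal (meanOsc f (Q i)) ^ p) ^ p⁻¹) := by
        gcongr
        exact ENNReal.tsum_mul_le_weight_mul_Lp hp.le _ _
    _ ≤ 2 * JN p f Q₀ * (∑' i, volume (Q i)) ^ (1 - 1 / p) := by
        rw [one_div, mul_comm (_ ^ (1 - p⁻¹)), ← mul_assoc]
        gcongr

/-- `GaRo_p(f,Q₀) ≤ 2 · JN_p(f,Q₀)`; in particular `JN_p(Q₀) ⊂ GaRo_p(Q₀)`. -/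
theorem gaRo_le_two_jn {n : ℕ} (p : ℝ) (hp : 1 < p)
    (Q₀ : Set (Fin n → ℝ)) (hQ₀ : IsCube Q₀)
    (f : (Fin n → ℝ) → ℝ) (hf : IntegrableOn f Q₀) :
    GaRo p f Q₀ ≤ 2 * JN p f Q₀ :=
  gaRo_le_two_jn_general p hp Q₀ f hf
end
end

section
/- Let 1 < p < ∞ and let Q₀ ⊂ ℝⁿ be a cube with sides parallel to the coordinate axes. Then for every f ∈ L¹(Q₀), GaRo_p(f,Q₀) ≤ (2p/(p−1)) · ‖f‖*_{L(p,∞)(Q₀)}, where ‖f‖*_{L(p,∞)} = sup_{t>0} t (λ_f(t))^{1/p}. -/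
open MeasureTheory Set
open scoped ENNReal NNReal

noncomputable section

/-!
Since `|f x - f y| ≤ |f x| + |f y|`, each term `(1/|Q|) ∫_Q ∫_Q |f x - f y|` is at most
`2 ∫_Q |f|`. The cubes of a packing overlap only in their (null) boundaries, so the left side of
the Garsia–Rodemich inequality is at most `2 ∫_E |f|` with `E = ⋃ interior Qᵢ`, `|E| = Σ |Qᵢ|`.
By the layer-cake formula and `λ_f(t) ≤ (‖f‖*/t)^p`,
`∫_E |f| = ∫_0^∞ |{|f| > t} ∩ E| dt ≤ ∫_0^∞ min(|E|, (‖f‖*/t)^p) dt`, and splitting the last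
integral where the two terms of the minimum cross gives `p/(p-1) ‖f‖* |E|^{1-1/p}`.
-/

namespace IsCube

variable {n : ℕ} {Q : Set (Fin n → ℝ)}

lemma isCompact (h : IsCube Q) : IsCompact Q := by
  obtain ⟨a, l, -, rfl⟩ := h
  exact isCompact_univ_pi fun i => isCompact_Icc

lemma volume_ne_top_s4 (h : IsCube Q) : volume Q ≠ ⊤ :=
  h.isCompact.measure_ne_top

lemma interior_ae_eq (h : IsCube Q) : interior Q =ᵐ[volume] Q := by
  obtain ⟨a, l, -, rfl⟩ := h
  exact interior_ae_eq_of_null_frontier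
    ((convex_pi fun i _ => convex_Icc (a i) (a i + l)).addHaar_frontier volume)

end IsCube

namespace IsPackingIn

variable {n : ℕ} {Q₀ : Set (Fin n → ℝ)} {Q : ℕ → Set (Fin n → ℝ)}

lemma iUnion_interior_subset (hQ : IsPackingIn Q₀ Q) : ⋃ i, interior (Q i) ⊆ Q₀ :=
  iUnion_subset fun i => interior_subset.trans (hQ.1 i).2

lemma tsum_setLIntegral (hQ : IsPackingIn Q₀ Q) (g : (Fin n → ℝ) → ℝ≥0∞) :
    ∑' i, ∫⁻ x in Q i, g x = ∫⁻ x in ⋃ i, interior (Q i), g x := by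
  rw [lintegral_iUnion (fun i => isOpen_interior.measurableSet)
    fun i j hij => disjoint_iff_inter_eq_empty.mpr (hQ.2 hij)]
  exact tsum_congr fun i => (setLIntegral_congr (hQ.1 i).1.interior_ae_eq).symm

lemma tsum_volume (hQ : IsPackingIn Q₀ Q) :
    ∑' i, volume (Q i) = volume (⋃ i, interior (Q i)) := by
  simpa only [setLIntegral_one] using hQ.tsum_setLIntegral fun _ => 1

end IsPackingIn

lemma lintegral_Ioi_div_rpow {p : ℝ} (hp : 1 < p) {t₀ : ℝ} (ht₀ : 0 < t₀) (W : ℝ≥0∞) :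
    ∫⁻ t in Ioi t₀, (W / ENNReal.ofReal t) ^ p =
      W ^ p * ENNReal.ofReal (t₀ ^ (1 - p) / (p - 1)) := by
  have hpow : ∀ t ∈ Ioi t₀, (W / ENNReal.ofReal t) ^ p = W ^ p * ENNReal.ofReal (t ^ (-p)) := by
    intro t ht
    have htpos : 0 < t := ht₀.trans ht
    rw [ENNReal.div_rpow_of_nonneg _ _ (by linarith), ENNReal.ofReal_rpow_of_pos htpos,
      div_eq_mul_inv, ← ENNReal.ofReal_inv_of_pos (Real.rpow_pos_of_pos htpos p),
      ← Real.rpow_neg htpos.le]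
  have hint : ∫ t in Ioi t₀, t ^ (-p) = t₀ ^ (1 - p) / (p - 1) := by
    rw [integral_Ioi_rpow_of_lt (by linarith) ht₀, show -p + 1 = -(p - 1) by ring,
      div_neg, neg_div, neg_neg, neg_sub]
  rw [setLIntegral_congr_fun measurableSet_Ioi hpow,
    lintegral_const_mul _ (by fun_prop : Measurable fun t : ℝ => ENNReal.ofReal (t ^ (-p))),
    ← hint,
    ofReal_integral_eq_lintegral_ofReal (integrableOn_Ioi_rpow_of_lt (by linarith) ht₀)
      ((ae_restrict_mem measurableSet_Ioi).mono fun t ht => Real.rpow_nonneg (ht₀.trans ht).le _)]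

lemma lintegral_min_div_rpow_le {p : ℝ} (hp : 1 < p) {V : ℝ≥0∞} (hV : V ≠ ⊤) (W : ℝ≥0∞) :
    ∫⁻ t in Ioi 0, min V ((W / ENNReal.ofReal t) ^ p) ≤
      ENNReal.ofReal (p / (p - 1)) * W * V ^ (1 - 1 / p) := by
  have hp0 : 0 < p := by linarith
  rcases eq_or_ne V 0 with rfl | hV0
  · simp
  rcases eq_or_ne W 0 with rfl | hW0
  · simp [ENNReal.zero_rpow_of_pos hp0]
  rcases eq_or_ne W ⊤ with rfl | hWtop
  · have : V ^ (1 - 1 / p) ≠ 0 := (ENNReal.rpow_pos (pos_iff_ne_zero.2 hV0) hV).ne'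
    rw [ENNReal.mul_top (by simp [hp0, hp]), ENNReal.top_mul this]
    exact le_top
  obtain ⟨v, hv, rfl⟩ : ∃ v : ℝ, 0 < v ∧ V = ENNReal.ofReal v :=
    ⟨V.toReal, ENNReal.toReal_pos hV0 hV, (ENNReal.ofReal_toReal hV).symm⟩
  obtain ⟨w, hw, rfl⟩ : ∃ w : ℝ, 0 < w ∧ W = ENNReal.ofReal w :=
    ⟨W.toReal, ENNReal.toReal_pos hW0 hWtop, (ENNReal.ofReal_toReal hWtop).symm⟩
  -- split at the crossover point `t₀` where `v = (w / t₀) ^ p`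
  set t₀ := w * v ^ (-(1 / p)) with ht₀_def
  have ht₀ : 0 < t₀ := by positivity
  have hsplit : ∫⁻ t in Ioi 0, min (ENNReal.ofReal v) ((ENNReal.ofReal w / ENNReal.ofReal t) ^ p)
      ≤ ENNReal.ofReal v * ENNReal.ofReal t₀ +
        ENNReal.ofReal w ^ p * ENNReal.ofReal (t₀ ^ (1 - p) / (p - 1)) := by
    rw [← Ioc_union_Ioi_eq_Ioi ht₀.le, lintegral_union measurableSet_Ioi Ioc_disjoint_Ioi_same]
    calc _ ≤ (∫⁻ _ in Ioc 0 t₀, ENNReal.ofReal v) +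
          ∫⁻ t in Ioi t₀, (ENNReal.ofReal w / ENNReal.ofReal t) ^ p :=
          add_le_add (lintegral_mono fun t => min_le_left _ _)
            (lintegral_mono fun t => min_le_right _ _)
      _ = _ := by
          rw [setLIntegral_const, Real.volume_Ioc, sub_zero, lintegral_Ioi_div_rpow hp ht₀]
  have hvt₀ : v * t₀ = w * v ^ (1 - 1 / p) := by
    rw [ht₀_def, sub_eq_add_neg, Real.rpow_add hv, Real.rpow_one]
    ring
  have htail : w ^ p * t₀ ^ (1 - p) = w * v ^ (1 - 1 / p) := by
    rw [ht₀_def, Real.mul_rpow hw.le (by positivity), ← Real.rpow_mul hv.le, ← mul_assoc,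
      ← Real.rpow_add hw, add_sub_cancel, Real.rpow_one]
    congr 2
    field_simp
    ring
  refine hsplit.trans_eq ?_
  rw [← ENNReal.ofReal_mul hv.le, ENNReal.ofReal_rpow_of_pos hw,
    ← ENNReal.ofReal_mul (by positivity), ← ENNReal.ofReal_add (by positivity) (by positivity),
    ENNReal.ofReal_rpow_of_pos hv, ← ENNReal.ofReal_mul (by positivity),
    ← ENNReal.ofReal_mul (by positivity), mul_div_assoc', htail, hvt₀]
  congr 1
  field_simp [(sub_pos.2 hp).ne']
  ring

section WeakType

variable {α : Type*} [MeasurableSpace α] {μ : Measure α} {f : α → ℝ}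

lemma distFun_le_wkNorm_div_rpow {p : ℝ} (hp : 0 < p) {t : ℝ} (ht : 0 < t) :
    distFun μ f t ≤ (wkNorm μ p f / ENNReal.ofReal t) ^ p := by
  have h : ENNReal.ofReal t * distFun μ f t ^ (1 / p) ≤ wkNorm μ p f :=
    le_iSup₂ (f := fun (t : ℝ) (_ : 0 < t) => ENNReal.ofReal t * distFun μ f t ^ (1 / p)) t ht
  rw [← ENNReal.rpow_inv_le_iff hp, ← one_div,
    ENNReal.le_div_iff_mul_le (.inl (by simpa using ht)) (.inl ENNReal.ofReal_ne_top), mul_comm]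
  exact h

lemma setLIntegral_abs_le_wkNorm {p : ℝ} (hp : 1 < p) (hf : AEMeasurable f μ) {E : Set α}
    (hE : μ E ≠ ⊤) :
    ∫⁻ x in E, ENNReal.ofReal |f x| ∂μ ≤
      ENNReal.ofReal (p / (p - 1)) * wkNorm μ p f * μ E ^ (1 - 1 / p) := by
  rw [lintegral_eq_lintegral_meas_lt _ (.of_forall fun x => abs_nonneg (f x)) hf.restrict.abs]
  refine le_trans (setLIntegral_mono' measurableSet_Ioi fun t ht => le_min ?_ ?_)
    (lintegral_min_div_rpow_le hp hE _)
  · exact (measure_mono (subset_univ _)).trans_eq (Measure.restrict_apply_univ E)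
  · exact (Measure.restrict_apply_le _ _).trans (distFun_le_wkNorm_div_rpow (by linarith) ht)

lemma setLIntegral_setLIntegral_abs_sub_le {s : Set α} (hf : AEMeasurable f (μ.restrict s)) :
    ∫⁻ x in s, ∫⁻ y in s, ENNReal.ofReal |f x - f y| ∂μ ∂μ ≤
      μ s * (2 * ∫⁻ x in s, ENNReal.ofReal |f x| ∂μ) := by
  have hf' : AEMeasurable (fun x => ENNReal.ofReal |f x|) (μ.restrict s) := hf.abs.ennreal_ofReal
  calc ∫⁻ x in s, ∫⁻ y in s, ENNReal.ofReal |f x - f y| ∂μ ∂μ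
      ≤ ∫⁻ x in s, ∫⁻ y in s, (ENNReal.ofReal |f x| + ENNReal.ofReal |f y|) ∂μ ∂μ := by
        gcongr with x y
        rw [← ENNReal.ofReal_add (abs_nonneg _) (abs_nonneg _)]
        exact ENNReal.ofReal_le_ofReal (abs_sub _ _)
    _ = μ s * (2 * ∫⁻ x in s, ENNReal.ofReal |f x| ∂μ) := by
        simp only [lintegral_add_left' aemeasurable_const,
          lintegral_add_right' _ aemeasurable_const, setLIntegral_const,
          lintegral_mul_const'' _ hf']
        ring

lemma inv_mul_setLIntegral_setLIntegral_abs_sub_le {s : Set α}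
    (hf : AEMeasurable f (μ.restrict s)) :
    (μ s)⁻¹ * ∫⁻ x in s, ∫⁻ y in s, ENNReal.ofReal |f x - f y| ∂μ ∂μ ≤
      2 * ∫⁻ x in s, ENNReal.ofReal |f x| ∂μ := by
  calc _ ≤ (μ s)⁻¹ * (μ s * (2 * ∫⁻ x in s, ENNReal.ofReal |f x| ∂μ)) :=
        mul_le_mul_right (setLIntegral_setLIntegral_abs_sub_le hf) _
    _ ≤ _ := by
        rw [← mul_assoc]
        exact mul_le_of_le_one_left' (ENNReal.inv_mul_le_one _)

end WeakType

/-- `GaRo_p(f,Q₀) ≤ (2p/(p-1)) ‖f‖*_{L(p,∞)(Q₀)}`. -/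
theorem gaRo_le_wk {n : ℕ} (p : ℝ) (hp : 1 < p)
    (Q₀ : Set (Fin n → ℝ)) (hQ₀ : IsCube Q₀)
    (f : (Fin n → ℝ) → ℝ) (hf : IntegrableOn f Q₀) :
    GaRo p f Q₀ ≤ ENNReal.ofReal (2 * p / (p - 1)) * wkNorm (volume.restrict Q₀) p f := by
  refine sInf_le fun Q hQ => ?_
  set E := ⋃ i, interior (Q i)
  have hE : E ⊆ Q₀ := hQ.iUnion_interior_subset
  have hf_meas : AEMeasurable f (volume.restrict Q₀) := hf.aestronglyMeasurable.aemeasurable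
  have hE_vol : volume.restrict Q₀ E = ∑' i, volume (Q i) := by
    rw [Measure.restrict_eq_self _ hE, hQ.tsum_volume]
  have hE_fin : volume.restrict Q₀ E ≠ ⊤ :=
    ne_top_of_le_ne_top hQ₀.volume_ne_top_s4 ((Measure.restrict_apply_le _ _).trans (measure_mono hE))
  calc ∑' i, (volume (Q i))⁻¹ * ∫⁻ x in Q i, ∫⁻ y in Q i, ENNReal.ofReal |f x - f y|
      ≤ ∑' i, 2 * ∫⁻ x in Q i, ENNReal.ofReal |f x| :=
        ENNReal.tsum_le_tsum fun i => inv_mul_setLIntegral_setLIntegral_abs_sub_le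
          (hf_meas.mono_measure (Measure.restrict_mono (hQ.1 i).2 le_rfl))
    _ = 2 * ∫⁻ x in E, ENNReal.ofReal |f x| ∂volume.restrict Q₀ := by
        rw [ENNReal.tsum_mul_left, hQ.tsum_setLIntegral, Measure.restrict_restrict_of_subset hE]
    _ ≤ 2 * (ENNReal.ofReal (p / (p - 1)) * wkNorm (volume.restrict Q₀) p f *
          volume.restrict Q₀ E ^ (1 - 1 / p)) := by
        gcongr
        exact setLIntegral_abs_le_wkNorm hp hf_meas hE_fin
    _ = _ := by
        rw [hE_vol, ← mul_assoc, ← mul_assoc, mul_div_assoc, ENNReal.ofReal_mul zero_le_two,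
          ENNReal.ofReal_ofNat]
end
end

section
/- Let (Ω,μ) be a measure space and f a measurable function on Ω. Then f ∈ L(∞,∞)(Ω), i.e. ‖f‖_{L(∞,∞)} = sup_{t>0}( f**(t) − f*(t) ) < ∞, if and only if there exists C > 0 such that ∫_t^∞ λ_f(s) ds ≤ C λ_f(t) for all t > 0; moreover the infimum of all such constants C equals ‖f‖_{L(∞,∞)}. -/
open MeasureTheory Set
open scoped ENNReal NNReal

noncomputable section

/-! The layer-cake formula, with Tonelli and the Galois connection `u < f*(s) ↔ s < λ_f(u)`,
gives `t f**(t) = ∫₀^∞ min(λ_f(u), t) du`. If `r = f*(t)`, then `λ_f ≤ t` on `(r, ∞)`, so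
`t f**(t) ≤ t r + ∫_r^∞ λ_f`, and an admissible constant `C` bounds `f**(t) - f*(t)`. Conversely,
at `u = λ_f(t)` the minimum equals `u` on `(0, t]` and `λ_f` on `(t, ∞)`, so
`u f**(u) = u t + ∫_t^∞ λ_f` while `f*(u) ≤ t`; hence `∫_t^∞ λ_f ≤ ‖f‖_{L(∞,∞)} λ_f(t)`. -/

theorem measure_setOf_lt_eq_iSup {β : Type*} [MeasurableSpace β] (ν : Measure β) (g : β → ℝ)
    (r : ℝ) : ν {x | r < g x} = ⨆ (v : ℝ) (_ : r < v), ν {x | v < g x} := by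
  have hunion : {x | r < g x} = ⋃ v : Ioi r, {x | (v : ℝ) < g x} := by
    ext x
    simp only [mem_ofPred_eq, mem_iUnion, Subtype.exists, mem_Ioi, exists_prop]
    exact ⟨exists_between, fun ⟨_, hrv, hvx⟩ => hrv.trans hvx⟩
  have hanti : Antitone fun v : Ioi r => {x | (v : ℝ) < g x} :=
    fun _ _ hvw _ hx => lt_of_le_of_lt (Subtype.coe_le_coe.mpr hvw) hx
  rw [hunion, hanti.measure_iUnion, iSup_subtype']
  rfl

theorem setLIntegral_Ioi_eq_iSup (g : ℝ → ℝ≥0∞) (r : ℝ) :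
    ∫⁻ s in Ioi r, g s = ⨆ (v : ℝ) (_ : r < v), ∫⁻ s in Ioi v, g s := by
  simp only [← withDensity_apply' g]
  exact measure_setOf_lt_eq_iSup _ id r

theorem setLIntegral_Ioi_eq_add (g : ℝ → ℝ≥0∞) {a b : ℝ} (hab : a ≤ b) :
    ∫⁻ s in Ioi a, g s = (∫⁻ s in Ioc a b, g s) + ∫⁻ s in Ioi b, g s := by
  rw [← Ioc_union_Ioi_eq_Ioi hab, lintegral_union measurableSet_Ioi (Ioc_disjoint_Ioi le_rfl)]

theorem measurableSet_ofReal_lt (c : ℝ≥0∞) : MeasurableSet {x : ℝ | ENNReal.ofReal x < c} :=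
  measurableSet_lt ENNReal.measurable_ofReal measurable_const

theorem volume_ofReal_lt_inter_Ioi (c : ℝ≥0∞) :
    volume ({x : ℝ | ENNReal.ofReal x < c} ∩ Ioi 0) = c := by
  rcases eq_or_ne c ⊤ with rfl | hc
  · simp
  · have hIoo : {x : ℝ | ENNReal.ofReal x < c} ∩ Ioi 0 = Ioo 0 c.toReal := by
      ext x
      simp only [mem_inter_iff, mem_ofPred_eq, mem_Ioi, mem_Ioo]
      exact (and_congr_left fun hx => ENNReal.ofReal_lt_iff_lt_toReal hx.le hc).trans and_comm
    rw [hIoo, Real.volume_Ioo, sub_zero, ENNReal.ofReal_toReal hc]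

theorem volume_ofReal_lt_inter_Ioo (c : ℝ≥0∞) {t : ℝ} (ht : 0 < t) :
    volume ({x : ℝ | ENNReal.ofReal x < c} ∩ Ioo 0 t) = min c (ENNReal.ofReal t) := by
  rw [← volume_ofReal_lt_inter_Ioi (min c _)]
  congr 1
  ext x
  simp only [mem_inter_iff, mem_ofPred_eq, mem_Ioi, mem_Ioo, lt_min_iff,
    ENNReal.ofReal_lt_ofReal_iff ht]
  tauto

section Rearrangement

variable {α : Type*} [MeasurableSpace α] {μ : Measure α} {f : α → ℝ}

theorem distFun_antitone : Antitone (distFun μ f) :=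
  fun _ _ hst => measure_mono fun _ hx => lt_of_le_of_lt hst hx

theorem distFun_eq_iSup (t : ℝ) : distFun μ f t = ⨆ (v : ℝ) (_ : t < v), distFun μ f v :=
  measure_setOf_lt_eq_iSup μ (fun x => |f x|) t

theorem rearr_le_ofReal {t u : ℝ} (hu : 0 < u) (h : distFun μ f u ≤ ENNReal.ofReal t) :
    rearr μ f t ≤ ENNReal.ofReal u :=
  sInf_le ⟨u, ⟨hu, h⟩, rfl⟩

theorem ofReal_lt_rearr_iff {s u : ℝ} (hu : 0 < u) :
    ENNReal.ofReal u < rearr μ f s ↔ ENNReal.ofReal s < distFun μ f u := by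
  refine ⟨fun h => not_le.mp fun hle => h.not_ge (rearr_le_ofReal hu hle), fun h => ?_⟩
  rw [distFun_eq_iSup] at h
  obtain ⟨v, huv, hv⟩ : ∃ v, u < v ∧ ENNReal.ofReal s < distFun μ f v := by
    simpa only [lt_iSup_iff, exists_prop] using h
  refine ((ENNReal.ofReal_lt_ofReal_iff (hu.trans huv)).mpr huv).trans_le (le_sInf ?_)
  rintro _ ⟨w, ⟨-, hw⟩, rfl⟩
  exact ENNReal.ofReal_le_ofReal
    (not_lt.mp fun hwv => hv.not_ge ((distFun_antitone hwv.le).trans hw))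

theorem lintegral_rearr_eq_lintegral_min_distFun {t : ℝ} (ht : 0 < t) :
    ∫⁻ s in Ioc 0 t, rearr μ f s
      = ∫⁻ u in Ioi 0, min (distFun μ f u) (ENNReal.ofReal t) := by
  set F : ℝ → ℝ → ℝ≥0∞ := fun s u =>
    {x : ℝ | ENNReal.ofReal x < distFun μ f u}.indicator 1 s
  have hF : Measurable (Function.uncurry F) := by
    refine measurable_one.indicator (measurableSet_lt ?_ ?_)
    exacts [ENNReal.measurable_ofReal.comp measurable_fst,
      distFun_antitone.measurable.comp measurable_snd]
  have hrearr : ∀ s, ∫⁻ u in Ioi 0, F s u = rearr μ f s := fun s => by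
    rw [← volume_ofReal_lt_inter_Ioi (rearr μ f s),
      ← Measure.restrict_apply (measurableSet_ofReal_lt _),
      ← lintegral_indicator_one (measurableSet_ofReal_lt _)]
    refine setLIntegral_congr_fun measurableSet_Ioi fun u hu => ?_
    simp only [F, indicator_apply, mem_ofPred_eq, Pi.one_apply,
      ofReal_lt_rearr_iff (mem_Ioi.mp hu)]
  calc ∫⁻ s in Ioc 0 t, rearr μ f s
      = ∫⁻ s in Ioo 0 t, ∫⁻ u in Ioi 0, F s u := by
        simp only [hrearr]
        exact (setLIntegral_congr Ioo_ae_eq_Ioc).symm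
    _ = ∫⁻ u in Ioi 0, ∫⁻ s in Ioo 0 t, F s u := lintegral_lintegral_swap hF.aemeasurable
    _ = ∫⁻ u in Ioi 0, min (distFun μ f u) (ENNReal.ofReal t) := by
        refine lintegral_congr fun u => ?_
        rw [lintegral_indicator_one (measurableSet_ofReal_lt _),
          Measure.restrict_apply (measurableSet_ofReal_lt _), volume_ofReal_lt_inter_Ioo _ ht]

theorem dstar_mul_ofReal {t : ℝ} (ht : 0 < t) :
    dstar μ f t * ENNReal.ofReal t
      = ∫⁻ u in Ioi 0, min (distFun μ f u) (ENNReal.ofReal t) := by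
  rw [dstar, ENNReal.div_mul_cancel (ENNReal.ofReal_pos.mpr ht).ne' ENNReal.ofReal_ne_top,
    lintegral_rearr_eq_lintegral_min_distFun ht]

theorem dstar_le_add_rearr {C : ℝ≥0∞}
    (hC : ∀ t : ℝ, 0 < t → ∫⁻ s in Ioi t, distFun μ f s ≤ C * distFun μ f t) {t : ℝ}
    (ht : 0 < t) : dstar μ f t ≤ C + rearr μ f t := by
  rcases eq_or_ne (rearr μ f t) ⊤ with htop | hfin
  · simp [htop]
  set r := (rearr μ f t).toReal
  have hr : 0 ≤ r := ENNReal.toReal_nonneg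
  have hofr : ENNReal.ofReal r = rearr μ f t := ENNReal.ofReal_toReal hfin
  have htail : ∫⁻ u in Ioi r, distFun μ f u ≤ C * ENNReal.ofReal t := by
    rw [setLIntegral_Ioi_eq_iSup]
    refine iSup₂_le fun v hrv => (hC v (hr.trans_lt hrv)).trans (mul_le_mul_right ?_ C)
    have hlt : rearr μ f t < ENNReal.ofReal v :=
      hofr ▸ (ENNReal.ofReal_lt_ofReal_iff (hr.trans_lt hrv)).mpr hrv
    exact not_lt.mp fun h => hlt.not_ge ((ofReal_lt_rearr_iff (hr.trans_lt hrv)).mpr h).le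
  have hlayer : ∫⁻ u in Ioi 0, min (distFun μ f u) (ENNReal.ofReal t)
      ≤ (C + rearr μ f t) * ENNReal.ofReal t :=
    calc ∫⁻ u in Ioi 0, min (distFun μ f u) (ENNReal.ofReal t)
        = (∫⁻ u in Ioc 0 r, min (distFun μ f u) (ENNReal.ofReal t))
            + ∫⁻ u in Ioi r, min (distFun μ f u) (ENNReal.ofReal t) :=
          setLIntegral_Ioi_eq_add _ hr
      _ ≤ (∫⁻ _ in Ioc 0 r, ENNReal.ofReal t) + ∫⁻ u in Ioi r, distFun μ f u :=
          add_le_add (lintegral_mono fun _ => min_le_right _ _)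
            (lintegral_mono fun _ => min_le_left _ _)
      _ ≤ rearr μ f t * ENNReal.ofReal t + C * ENNReal.ofReal t := by
          rw [setLIntegral_const, Real.volume_Ioc, sub_zero, hofr, mul_comm]
          exact add_le_add_right htail _
      _ = (C + rearr μ f t) * ENNReal.ofReal t := by ring
  rwa [← dstar_mul_ofReal ht, ENNReal.mul_le_mul_iff_left (ENNReal.ofReal_pos.mpr ht).ne'
    ENNReal.ofReal_ne_top] at hlayer

theorem oscNorm_le_of_forall_setLIntegral_le {C : ℝ≥0∞}
    (hC : ∀ t : ℝ, 0 < t → ∫⁻ s in Ioi t, distFun μ f s ≤ C * distFun μ f t) :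
    oscNorm μ f ≤ C :=
  iSup₂_le fun _ ht => tsub_le_iff_right.mpr (dstar_le_add_rearr hC ht)

theorem dstar_le_oscNorm_add_rearr {t : ℝ} (ht : 0 < t) :
    dstar μ f t ≤ oscNorm μ f + rearr μ f t :=
  tsub_le_iff_right.mp (le_iSup₂ (f := fun s (_ : 0 < s) => dstar μ f s - rearr μ f s) t ht)

theorem setLIntegral_Ioi_distFun_le_oscNorm_mul {t : ℝ} (ht : 0 < t)
    (hfin : distFun μ f t ≠ ⊤) :
    ∫⁻ s in Ioi t, distFun μ f s ≤ oscNorm μ f * distFun μ f t := by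
  rcases eq_or_ne (distFun μ f t) 0 with h0 | h0
  · have hzero : ∀ s ∈ Ioi t, distFun μ f s = 0 :=
      fun s hs => le_zero_iff.mp (h0 ▸ distFun_antitone hs.le)
    simp [setLIntegral_congr_fun measurableSet_Ioi hzero]
  set u := (distFun μ f t).toReal
  have hu : 0 < u := ENNReal.toReal_pos h0 hfin
  have hofu : distFun μ f t = ENNReal.ofReal u := (ENNReal.ofReal_toReal hfin).symm
  rw [hofu]
  have hsplit : dstar μ f u * ENNReal.ofReal u
      = ENNReal.ofReal t * ENNReal.ofReal u + ∫⁻ s in Ioi t, distFun μ f s := by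
    rw [dstar_mul_ofReal hu, setLIntegral_Ioi_eq_add _ ht.le]
    congr 1
    · rw [setLIntegral_congr_fun measurableSet_Ioc
        fun v hv => min_eq_right (hofu ▸ distFun_antitone hv.2),
        setLIntegral_const, Real.volume_Ioc, sub_zero, mul_comm]
    · exact setLIntegral_congr_fun measurableSet_Ioi
        fun v hv => min_eq_left (hofu ▸ distFun_antitone hv.le)
  have hbound : dstar μ f u * ENNReal.ofReal u
      ≤ (oscNorm μ f + ENNReal.ofReal t) * ENNReal.ofReal u :=
    mul_le_mul_left ((dstar_le_oscNorm_add_rearr hu).trans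
      (add_le_add_right (rearr_le_ofReal ht hofu.le) _)) _
  rw [hsplit, add_mul, add_comm (oscNorm μ f * _)] at hbound
  exact ENNReal.le_of_add_le_add_left (ENNReal.mul_ne_top ENNReal.ofReal_ne_top
    ENNReal.ofReal_ne_top) hbound

/- The inequality must be strict: for `f = 1` on a set of infinite measure, `oscNorm μ f = 0` and
`λ_f(t) = ∞` for `t < 1`, while `0 * ∞ = 0`. -/
theorem setLIntegral_Ioi_distFun_le_of_oscNorm_lt {C : ℝ≥0∞} (hC : oscNorm μ f < C) {t : ℝ}
    (ht : 0 < t) : ∫⁻ s in Ioi t, distFun μ f s ≤ C * distFun μ f t := by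
  rcases eq_or_ne (distFun μ f t) ⊤ with htop | hfin
  · simp [htop, ENNReal.mul_top (pos_of_gt hC).ne']
  · exact (setLIntegral_Ioi_distFun_le_oscNorm_mul ht hfin).trans (mul_le_mul_left hC.le _)

theorem sharpSharpInf_eq_oscNorm : sharpSharpInf μ f = oscNorm μ f :=
  le_antisymm
    (le_of_forall_gt_imp_ge_of_dense fun _ hC =>
      sInf_le fun _ ht => setLIntegral_Ioi_distFun_le_of_oscNorm_lt hC ht)
    (le_sInf fun _ hC => oscNorm_le_of_forall_setLIntegral_le hC)

end Rearrangement

theorem linftyinfty_char_general {α : Type*} [MeasurableSpace α] (μ : Measure α)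
    (f : α → ℝ) :
    (oscNorm μ f ≠ ⊤ ↔ ∃ C : ℝ, 0 < C ∧ ∀ t : ℝ, 0 < t →
        ∫⁻ s in Set.Ioi t, distFun μ f s ≤ ENNReal.ofReal C * distFun μ f t) ∧
    sInf {C : ℝ≥0∞ | ∀ t : ℝ, 0 < t →
        ∫⁻ s in Set.Ioi t, distFun μ f s ≤ C * distFun μ f t} = oscNorm μ f := by
  refine ⟨⟨fun hfin => ?_, ?_⟩, sharpSharpInf_eq_oscNorm⟩
  · refine ⟨(oscNorm μ f).toReal + 1, by positivity,
      fun t ht => setLIntegral_Ioi_distFun_le_of_oscNorm_lt ?_ ht⟩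
    calc oscNorm μ f = ENNReal.ofReal (oscNorm μ f).toReal := (ENNReal.ofReal_toReal hfin).symm
      _ < ENNReal.ofReal ((oscNorm μ f).toReal + 1) :=
        (ENNReal.ofReal_lt_ofReal_iff (by positivity)).mpr (lt_add_one _)
  · rintro ⟨C, -, hC⟩
    rw [← sharpSharpInf_eq_oscNorm]
    exact ne_top_of_le_ne_top ENNReal.ofReal_ne_top (sInf_le hC)

/-- `f ∈ L(∞,∞)(Ω)` iff there exists `C > 0` with
`∫_t^∞ λ_f(s) ds ≤ C λ_f(t)` for all `t > 0`; moreover the least such constant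
equals `‖f‖_{L(∞,∞)} = sup_{t>0}(f**(t) - f*(t))`. -/
theorem linftyinfty_char {α : Type*} [MeasurableSpace α] (μ : Measure α)
    (f : α → ℝ) (hf : Measurable f) :
    (oscNorm μ f ≠ ⊤ ↔ ∃ C : ℝ, 0 < C ∧ ∀ t : ℝ, 0 < t →
        ∫⁻ s in Set.Ioi t, distFun μ f s ≤ ENNReal.ofReal C * distFun μ f t) ∧
    sInf {C : ℝ≥0∞ | ∀ t : ℝ, 0 < t →
        ∫⁻ s in Set.Ioi t, distFun μ f s ≤ C * distFun μ f t} = oscNorm μ f :=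
  linftyinfty_char_general μ f
end
end

section
/- Let 1 < p < ∞ and let (Ω,μ) be a measure space. If f is a measurable function on Ω with f**(∞) = lim_{t→∞} f**(t) = 0, then ‖f‖_{L(p,∞)} ≤ p · ‖f‖^#_{L(p,∞)}, i.e. sup_{t>0} t^{1/p} f**(t) ≤ p · sup_{s>0} s^{1/p}( f**(s) − f*(s) ). -/
open MeasureTheory Set
open scoped ENNReal NNReal

noncomputable section

/-!
Since `t f**(t) = ∫₀ᵗ f*` and `f*` is non-increasing, for every `r > 1`
`f**(t) ≤ f**(rt) + (r - 1) (f**(rt) - f*(rt)) ≤ f**(rt) + (r - 1) N (rt)^{-1/p}`,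
where `N = ‖f‖^#_{L(p,∞)}`. Iterating along the geometric sequence `t, rt, r²t, …` and
using `f**(∞) = 0` gives `t^{1/p} f**(t) ≤ (r - 1) / (r^{1/p} - 1) · N`, and this constant
tends to `p` as `r → 1⁺`, being the reciprocal of a difference quotient of `x ↦ x^{1/p}` at `1`.
-/

open Filter Topology

lemma rearr_antitone {α : Type*} [MeasurableSpace α] (μ : Measure α) (f : α → ℝ) :
    Antitone (rearr μ f) := fun _ _ hab =>
  sInf_le_sInf <| image_mono fun _ hs => ⟨hs.1, hs.2.trans (ENNReal.ofReal_le_ofReal hab)⟩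

/-- Hardy's averaging operator; `dstar μ f` is `hardyAvg (rearr μ f)` by definition. -/
def hardyAvg (g : ℝ → ℝ≥0∞) (t : ℝ) : ℝ≥0∞ :=
  (∫⁻ s in Ioc (0 : ℝ) t, g s) / ENNReal.ofReal t

lemma tendsto_sub_one_div_rpow_sub_one {q : ℝ} (hq : q ≠ 0) :
    Tendsto (fun r : ℝ => (r - 1) / (r ^ q - 1)) (𝓝[≠] 1) (𝓝 q⁻¹) := by
  have hderiv : HasDerivAt (fun x : ℝ => x ^ q) q 1 := by
    simpa using Real.hasDerivAt_rpow_const (x := 1) (p := q) (Or.inl one_ne_zero)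
  refine ((hasDerivAt_iff_tendsto_slope.mp hderiv).inv₀ hq).congr fun r => ?_
  rw [slope_def_field, Real.one_rpow, inv_div]

/-- `c = (r - 1) / (r^q - 1)` is the constant for which the one-step bound of the iteration
reproduces itself one step further. -/
lemma sub_one_div_rpow_sub_one_mul_rpow_neg_add {q r t : ℝ} (hr : 1 < r) (ht : 0 < t)
    (hq : 0 < q) :
    (r - 1) / (r ^ q - 1) * (r * t) ^ (-q) + (r - 1) * (r * t) ^ (-q)
      = (r - 1) / (r ^ q - 1) * t ^ (-q) := by
  have hrq : r ^ q - 1 ≠ 0 := (sub_pos.2 (Real.one_lt_rpow hr hq)).ne'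
  rw [Real.mul_rpow (by linarith) ht.le, Real.rpow_neg (by linarith)]
  field_simp
  ring

lemma ENNReal.le_ofReal_rpow_neg_mul {s q : ℝ} (hs : 0 < s) {a b : ℝ≥0∞}
    (h : ENNReal.ofReal s ^ q * a ≤ b) : a ≤ ENNReal.ofReal (s ^ (-q)) * b :=
  calc a = ENNReal.ofReal (s ^ (-q)) * (ENNReal.ofReal s ^ q * a) := by
        rw [← mul_assoc, ENNReal.ofReal_rpow_of_pos hs, ← ENNReal.ofReal_mul (by positivity),
          ← Real.rpow_add hs, neg_add_cancel, Real.rpow_zero, ENNReal.ofReal_one, one_mul]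
    _ ≤ ENNReal.ofReal (s ^ (-q)) * b := by gcongr

namespace Antitone

variable {g : ℝ → ℝ≥0∞} (hg : Antitone g)
include hg

lemma mul_le_setLIntegral_Ioc (a b : ℝ) :
    ENNReal.ofReal (b - a) * g b ≤ ∫⁻ s in Ioc a b, g s :=
  calc ENNReal.ofReal (b - a) * g b = ∫⁻ _ in Ioc a b, g b := by
        rw [setLIntegral_const, Real.volume_Ioc, mul_comm]
    _ ≤ ∫⁻ s in Ioc a b, g s := setLIntegral_mono' measurableSet_Ioc fun _ hs => hg hs.2

lemma le_hardyAvg {t : ℝ} (ht : 0 < t) : g t ≤ hardyAvg g t := by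
  rw [hardyAvg, ENNReal.le_div_iff_mul_le (Or.inl (by simpa)) (Or.inl ENNReal.ofReal_ne_top),
    mul_comm]
  simpa using hg.mul_le_setLIntegral_Ioc 0 t

lemma hardyAvg_add_mul_le {t r : ℝ} (ht : 0 < t) (hr : 1 ≤ r) :
    hardyAvg g t + ENNReal.ofReal (r - 1) * g (r * t)
      ≤ ENNReal.ofReal r * hardyAvg g (r * t) := by
  have htr : t ≤ r * t := le_mul_of_one_le_left ht.le hr
  have ht' : ENNReal.ofReal t ≠ 0 := by simpa
  have hsplit : (∫⁻ s in Ioc 0 t, g s) + ENNReal.ofReal ((r - 1) * t) * g (r * t)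
      ≤ ∫⁻ s in Ioc 0 (r * t), g s := by
    rw [← Ioc_union_Ioc_eq_Ioc ht.le htr,
      lintegral_union measurableSet_Ioc (Ioc_disjoint_Ioc_of_le le_rfl)]
    gcongr
    simpa [sub_one_mul] using hg.mul_le_setLIntegral_Ioc t (r * t)
  calc hardyAvg g t + ENNReal.ofReal (r - 1) * g (r * t)
      = ((∫⁻ s in Ioc 0 t, g s) + ENNReal.ofReal ((r - 1) * t) * g (r * t))
          / ENNReal.ofReal t := by
        rw [ENNReal.add_div, hardyAvg, ENNReal.ofReal_mul (by linarith), mul_right_comm,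
          mul_div_assoc, ENNReal.div_self ht' ENNReal.ofReal_ne_top, mul_one]
    _ ≤ (∫⁻ s in Ioc 0 (r * t), g s) / ENNReal.ofReal t := by gcongr
    _ = ENNReal.ofReal r * hardyAvg g (r * t) := by
        rw [hardyAvg, ENNReal.ofReal_mul (by linarith), ← mul_div_assoc,
          ENNReal.mul_div_mul_left _ _ (by simp; linarith) ENNReal.ofReal_ne_top]

lemma hardyAvg_le_add_mul_sub {t r : ℝ} (ht : 0 < t) (hr : 1 ≤ r) :
    hardyAvg g t
      ≤ hardyAvg g (r * t) + ENNReal.ofReal (r - 1) * (hardyAvg g (r * t) - g (r * t)) := by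
  have hle : g (r * t) ≤ hardyAvg g (r * t) := hg.le_hardyAvg (by positivity)
  by_cases htop : g (r * t) = ∞
  · simp [top_le_iff.mp (htop ▸ hle)]
  have hfin : ENNReal.ofReal (r - 1) * g (r * t) ≠ ∞ :=
    ENNReal.mul_ne_top ENNReal.ofReal_ne_top htop
  refine (ENNReal.add_le_add_iff_right hfin).mp ?_
  calc hardyAvg g t + ENNReal.ofReal (r - 1) * g (r * t)
      ≤ ENNReal.ofReal r * hardyAvg g (r * t) := hg.hardyAvg_add_mul_le ht hr
    _ = _ := by
        rw [add_assoc, ← mul_add, tsub_add_cancel_of_le hle, ← one_add_mul, ← ENNReal.ofReal_one,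
          ← ENNReal.ofReal_add zero_le_one (by linarith), add_sub_cancel]

section SharpBound

variable {p : ℝ} {N : ℝ≥0∞}
  (hN : ∀ s, 0 < s → ENNReal.ofReal s ^ (1 / p) * (hardyAvg g s - g s) ≤ N)
include hN

lemma hardyAvg_le_add_rpow_neg_mul {t r : ℝ} (ht : 0 < t) (hr : 1 ≤ r) :
    hardyAvg g t
      ≤ hardyAvg g (r * t) + ENNReal.ofReal ((r - 1) * (r * t) ^ (-(1 / p))) * N := by
  have hrt : 0 < r * t := by positivity
  calc hardyAvg g t
      ≤ hardyAvg g (r * t) + ENNReal.ofReal (r - 1) * (hardyAvg g (r * t) - g (r * t)) :=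
        hg.hardyAvg_le_add_mul_sub ht hr
    _ ≤ hardyAvg g (r * t)
          + ENNReal.ofReal (r - 1) * (ENNReal.ofReal ((r * t) ^ (-(1 / p))) * N) := by
        gcongr
        exact ENNReal.le_ofReal_rpow_neg_mul hrt (hN _ hrt)
    _ = _ := by rw [ENNReal.ofReal_mul (by linarith), mul_assoc]

lemma hardyAvg_le_hardyAvg_pow_mul_add (hp : 0 < p) {r : ℝ} (hr : 1 < r) (k : ℕ) {t : ℝ}
    (ht : 0 < t) :
    hardyAvg g t ≤ hardyAvg g (r ^ k * t)
      + ENNReal.ofReal ((r - 1) / (r ^ (1 / p) - 1) * t ^ (-(1 / p))) * N := by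
  induction k generalizing t with
  | zero => simp
  | succ k ih =>
    have hrt : 0 < r * t := by positivity
    have hc : 0 ≤ (r - 1) / (r ^ (1 / p) - 1) :=
      div_nonneg (by linarith) (sub_nonneg.2 (Real.one_le_rpow hr.le (by positivity)))
    calc hardyAvg g t
        ≤ hardyAvg g (r * t) + ENNReal.ofReal ((r - 1) * (r * t) ^ (-(1 / p))) * N :=
          hg.hardyAvg_le_add_rpow_neg_mul hN ht hr.le
      _ ≤ hardyAvg g (r ^ k * (r * t))
            + ENNReal.ofReal ((r - 1) / (r ^ (1 / p) - 1) * (r * t) ^ (-(1 / p))) * N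
            + ENNReal.ofReal ((r - 1) * (r * t) ^ (-(1 / p))) * N := by
          gcongr
          exact ih hrt
      _ = _ := by
          rw [add_assoc, ← add_mul, ← ENNReal.ofReal_add (by positivity)
            (mul_nonneg (by linarith) (by positivity)),
            sub_one_div_rpow_sub_one_mul_rpow_neg_add hr ht (by positivity), pow_succ, mul_assoc]

lemma hardyAvg_le_ofReal_mul (hlim : Tendsto (hardyAvg g) atTop (𝓝 0)) (hp : 0 < p) {r : ℝ}
    (hr : 1 < r) {t : ℝ} (ht : 0 < t) :
    hardyAvg g t ≤ ENNReal.ofReal ((r - 1) / (r ^ (1 / p) - 1) * t ^ (-(1 / p))) * N := by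
  have hscale : Tendsto (fun k : ℕ => r ^ k * t) atTop atTop :=
    (tendsto_pow_atTop_atTop_of_one_lt hr).atTop_mul_const ht
  have hlim' := (hlim.comp hscale).add_const
    (ENNReal.ofReal ((r - 1) / (r ^ (1 / p) - 1) * t ^ (-(1 / p))) * N)
  rw [zero_add] at hlim'
  exact _root_.ge_of_tendsto hlim'
    (.of_forall fun k => hg.hardyAvg_le_hardyAvg_pow_mul_add hN hp hr k ht)

theorem rpow_mul_hardyAvg_le (hlim : Tendsto (hardyAvg g) atTop (𝓝 0)) (hp : 0 < p) {t : ℝ}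
    (ht : 0 < t) :
    ENNReal.ofReal t ^ (1 / p) * hardyAvg g t ≤ ENNReal.ofReal p * N := by
  have hc : Tendsto (fun r : ℝ => ENNReal.ofReal ((r - 1) / (r ^ (1 / p) - 1)) * N) (𝓝[>] 1)
      (𝓝 (ENNReal.ofReal p * N)) := by
    refine ENNReal.Tendsto.mul_const (ENNReal.tendsto_ofReal ?_) (Or.inl (by simpa))
    simpa using (tendsto_sub_one_div_rpow_sub_one (one_div_pos.2 hp).ne').mono_left
      (nhdsWithin_mono _ fun _ hr => ne_of_gt hr : 𝓝[>] (1 : ℝ) ≤ 𝓝[≠] 1)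
  refine _root_.ge_of_tendsto hc (eventually_nhdsWithin_of_forall fun r (hr : 1 < r) => ?_)
  calc ENNReal.ofReal t ^ (1 / p) * hardyAvg g t
      ≤ ENNReal.ofReal t ^ (1 / p)
          * (ENNReal.ofReal ((r - 1) / (r ^ (1 / p) - 1) * t ^ (-(1 / p))) * N) := by
        gcongr
        exact hg.hardyAvg_le_ofReal_mul hN hlim hp hr ht
    _ = ENNReal.ofReal ((r - 1) / (r ^ (1 / p) - 1)) * N := by
        rw [← mul_assoc, ENNReal.ofReal_rpow_of_pos ht, ← ENNReal.ofReal_mul (by positivity),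
          mul_left_comm, ← Real.rpow_add ht, add_neg_cancel, Real.rpow_zero, mul_one]

end SharpBound

end Antitone

theorem wkNorm_le_sharpNorm_general {α : Type*} [MeasurableSpace α] (μ : Measure α)
    (p : ℝ) (hp : 1 < p) (f : α → ℝ)
    (hlim : Filter.Tendsto (dstar μ f) Filter.atTop (nhds 0)) :
    wkNormStarStar μ p f ≤ ENNReal.ofReal p * sharpNorm μ p f := by
  have hsharp : ∀ s, 0 < s →
      ENNReal.ofReal s ^ (1 / p) * (dstar μ f s - rearr μ f s) ≤ sharpNorm μ p f :=
    fun s hs => le_iSup₂ (f := fun s (_ : 0 < s) =>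
      ENNReal.ofReal s ^ (1 / p) * (dstar μ f s - rearr μ f s)) s hs
  exact iSup₂_le fun _ ht =>
    (rearr_antitone μ f).rpow_mul_hardyAvg_le hsharp hlim (by linarith) ht

/-- if `f**(∞) = 0` then `‖f‖_{L(p,∞)} ≤ p ‖f‖^#_{L(p,∞)}`, i.e.
`sup_{t>0} t^{1/p} f**(t) ≤ p · sup_{s>0} s^{1/p} (f**(s) - f*(s))`. -/
theorem wkNorm_le_sharpNorm {α : Type*} [MeasurableSpace α] (μ : Measure α)
    (p : ℝ) (hp : 1 < p) (f : α → ℝ) (hf : Measurable f)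
    (hlim : Filter.Tendsto (dstar μ f) Filter.atTop (nhds 0)) :
    wkNormStarStar μ p f ≤ ENNReal.ofReal p * sharpNorm μ p f :=
  wkNorm_le_sharpNorm_general μ p hp f hlim
end
end
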